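/- arXiv:1210.7317 — 15 statements merged into one kernel-verified Lean document; each statement's English description precedes it below -/
import Mathlib

section
/- Let M be a boolean algebra and ◇ : M → M a Magari operator, i.e., ◇⊥ = ⊥, ◇(x ⊔ y) = ◇x ⊔ ◇y for all x, y, and ◇x = ◇(x ⊓ (◇x)ᶜ) for all x. Then for every x ∈ M, ◇◇x ≤ ◇x. -/
/-- In a boolean algebra with a Magari operator `dia`
(`dia ⊥ = ⊥`, `dia (x ⊔ y) = dia x ⊔ dia y`, `dia x = dia (x ⊓ (dia x)ᶜ)`),
we have `dia (dia x) ≤ dia x` for all `x`. -/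
theorem magari_transitivity {M : Type*} [BooleanAlgebra M] (dia : M → M)
    (h1 : dia ⊥ = ⊥)
    (h2 : ∀ x y : M, dia (x ⊔ y) = dia x ⊔ dia y)
    (h3 : ∀ x : M, dia x = dia (x ⊓ (dia x)ᶜ)) :
    ∀ x : M, dia (dia x) ≤ dia x := by
  have mono : ∀ a b : M, a ≤ b → dia a ≤ dia b := by
    intro a b hab
    have : dia b = dia a ⊔ dia b := by
      conv_lhs => rw [← sup_eq_right.mpr hab, h2]
    rw [this]; exact le_sup_left
  intro x
  have hy := h3 (x ⊔ dia x)
  have hle : (x ⊔ dia x) ⊓ (dia (x ⊔ dia x))ᶜ ≤ x ⊓ (dia x)ᶜ := by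
    rw [h2]
    have hc : (dia x ⊔ dia (dia x))ᶜ ≤ (dia x)ᶜ := compl_le_compl le_sup_left
    refine le_inf ?_ (inf_le_right.trans hc)
    calc (x ⊔ dia x) ⊓ (dia x ⊔ dia (dia x))ᶜ ≤ (x ⊔ dia x) ⊓ (dia x)ᶜ :=
          inf_le_inf_left _ hc
      _ ≤ x := by
          rw [inf_sup_right, inf_compl_eq_bot, sup_bot_eq]; exact inf_le_left
  have : dia (x ⊔ dia x) ≤ dia x := by
    rw [hy]
    exact (mono _ _ hle).trans (le_of_eq (h3 x).symm)
  calc dia (dia x) ≤ dia (x ⊔ dia x) := mono _ _ le_sup_right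
    _ ≤ dia x := this
end

section
/- Let M be a boolean algebra and let f, g : M → M both be Magari operators (f⊥ = ⊥, f(x ⊔ y) = f x ⊔ f y, f x = f(x ⊓ (f x)ᶜ), and the same identities for g). Assume the identity P2: g x ≤ f x for all x. Then the identity P1: f x ≤ (g((f x)ᶜ))ᶜ holds for all x if and only if the identity P1′: g y ⊓ f x = g(y ⊓ f x) holds for all x and y. -/
/-- For two Magari operators `f` (playing ⟨m⟩) and `g` (playing ⟨n⟩, m < n)
on a boolean algebra satisfying P2 (`g x ≤ f x`), the identity
P1 (`f x ≤ (g ((f x)ᶜ))ᶜ`) holds for all `x` iff the identity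
P1′ (`g y ⊓ f x = g (y ⊓ f x)`) holds for all `x`, `y`. -/
theorem magari_P1_iff_P1' {M : Type*} [BooleanAlgebra M] (f g : M → M)
    (hf1 : f ⊥ = ⊥) (hf2 : ∀ x y : M, f (x ⊔ y) = f x ⊔ f y)
    (hf3 : ∀ x : M, f x = f (x ⊓ (f x)ᶜ))
    (hg1 : g ⊥ = ⊥) (hg2 : ∀ x y : M, g (x ⊔ y) = g x ⊔ g y)
    (hg3 : ∀ x : M, g x = g (x ⊓ (g x)ᶜ))
    (hP2 : ∀ x : M, g x ≤ f x) :
    (∀ x : M, f x ≤ (g ((f x)ᶜ))ᶜ) ↔ (∀ x y : M, g y ⊓ f x = g (y ⊓ f x)) := by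
  have hfm : ∀ {a b : M}, a ≤ b → f a ≤ f b := by
    intro a b h
    have : f (a ⊔ b) = f a ⊔ f b := hf2 a b
    rw [sup_eq_right.mpr h] at this
    rw [this]; exact le_sup_left
  have hgm : ∀ {a b : M}, a ≤ b → g a ≤ g b := by
    intro a b h
    have : g (a ⊔ b) = g a ⊔ g b := hg2 a b
    rw [sup_eq_right.mpr h] at this
    rw [this]; exact le_sup_left
  -- transitivity: f (f x) ≤ f x
  have hft : ∀ x : M, f (f x) ≤ f x := by
    intro x
    have key : f (x ⊔ f x) ≤ f x := by
      rw [hf3 (x ⊔ f x), hf2 x (f x)]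
      apply hfm
      calc (x ⊔ f x) ⊓ (f x ⊔ f (f x))ᶜ
          ≤ (x ⊔ f x) ⊓ (f x)ᶜ := by
            apply inf_le_inf_left
            exact compl_le_compl le_sup_left
        _ = x ⊓ (f x)ᶜ ⊔ f x ⊓ (f x)ᶜ := by rw [inf_sup_right]
        _ ≤ x := by simp [inf_le_left]
    have : f x ⊔ f (f x) ≤ f x := by rw [← hf2]; exact key
    exact le_trans le_sup_right this
  constructor
  · intro hP1 x y
    apply le_antisymm
    · -- g y ⊓ f x ≤ g (y ⊓ f x)
      have hy : y = y ⊓ f x ⊔ y ⊓ (f x)ᶜ := by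
        rw [← inf_sup_left]; simp
      have hgy : g y = g (y ⊓ f x) ⊔ g (y ⊓ (f x)ᶜ) := by
        conv_lhs => rw [hy]
        exact hg2 _ _
      have hbot : g (y ⊓ (f x)ᶜ) ⊓ f x = ⊥ := by
        have h1 : g (y ⊓ (f x)ᶜ) ≤ g ((f x)ᶜ) := hgm inf_le_right
        have h2 : g ((f x)ᶜ) ⊓ f x = ⊥ := by
          have := hP1 x
          rw [le_compl_iff_disjoint_left] at this
          rw [inf_comm]; exact this.symm.eq_bot
        have : g (y ⊓ (f x)ᶜ) ⊓ f x ≤ g ((f x)ᶜ) ⊓ f x :=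
          inf_le_inf_right _ h1
        rw [h2] at this
        exact le_bot_iff.mp this
      calc g y ⊓ f x = (g (y ⊓ f x) ⊔ g (y ⊓ (f x)ᶜ)) ⊓ f x := by rw [← hgy]
        _ = g (y ⊓ f x) ⊓ f x ⊔ g (y ⊓ (f x)ᶜ) ⊓ f x := by rw [inf_sup_right]
        _ ≤ g (y ⊓ f x) ⊔ ⊥ := by
            rw [hbot]; exact sup_le_sup_right inf_le_left _
        _ = g (y ⊓ f x) := by simp
    · -- g (y ⊓ f x) ≤ g y ⊓ f x
      refine le_inf (hgm inf_le_left) ?_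
      calc g (y ⊓ f x) ≤ f (y ⊓ f x) := hP2 _
        _ ≤ f (f x) := hfm inf_le_right
        _ ≤ f x := hft x
  · intro hP1' x
    have := hP1' x ((f x)ᶜ)
    rw [compl_inf_self, hg1] at this
    rw [le_compl_iff_disjoint_left]
    exact disjoint_iff.mpr this
end

section
/- A topological space X is scattered if and only if for every subset A ⊆ X, d(A) = d(A \ d(A)), where d is the derived-set operator. -/
/-- A topological space is scattered if every nonempty subset has a point
isolated in it. -/
def IsScattered (X : Type*) [TopologicalSpace X] : Prop :=
  ∀ A : Set X, A.Nonempty → ∃ x ∈ A, ∃ U : Set X, IsOpen U ∧ U ∩ A = {x}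

/-- `X` is scattered iff for every `A ⊆ X`,
`d(A) = d(A \ d(A))`, where `d` is the derived-set operator. -/
theorem scattered_iff_derivedSet_sdiff {X : Type*} [TopologicalSpace X] :
    IsScattered X ↔ ∀ A : Set X, derivedSet A = derivedSet (A \ derivedSet A) := by
  constructor
  · intro h A
    refine subset_antisymm ?_ (derivedSet_mono _ _ Set.diff_subset)
    intro x hx
    rw [mem_derivedSet, accPt_iff_nhds] at hx ⊢
    intro U hU
    obtain ⟨U', hU'U, hU'open, hxU'⟩ := mem_nhds_iff.mp hU
    have hne : (U' ∩ A).Nonempty := by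
      obtain ⟨y, hy, _⟩ := hx U' (hU'open.mem_nhds hxU')
      exact ⟨y, hy⟩
    obtain ⟨z, hz, V, hVopen, hV⟩ := h (U' ∩ A) hne
    have hzU' : z ∈ U' := hz.1
    have hzA : z ∈ A := hz.2
    have hzx : z ≠ x := by
      rintro rfl
      obtain ⟨y, hy, hyz⟩ := hx (V ∩ U')
        ((hVopen.inter hU'open).mem_nhds ⟨hV.ge (Set.mem_singleton z) |>.1, hzU'⟩)
      apply hyz
      have : y ∈ V ∩ (U' ∩ A) := ⟨hy.1.1, hy.1.2, hy.2⟩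
      rw [hV] at this
      exact this
    refine ⟨z, ⟨hU'U hzU', hzA, ?_⟩, hzx⟩
    rw [mem_derivedSet, accPt_iff_nhds]
    push_neg
    refine ⟨V ∩ U', (hVopen.inter hU'open).mem_nhds ⟨hV.ge (Set.mem_singleton z) |>.1, hzU'⟩,
      fun y hy => ?_⟩
    have : y ∈ V ∩ (U' ∩ A) := ⟨hy.1.1, hy.1.2, hy.2⟩
    rw [hV] at this
    exact this
  · intro h A hA
    by_contra hc
    push_neg at hc
    have hsub : A ⊆ derivedSet A := by
      intro x hxA
      rw [mem_derivedSet, accPt_iff_nhds]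
      intro U hU
      obtain ⟨U', hU'U, hU'open, hxU'⟩ := mem_nhds_iff.mp hU
      have := hc x hxA U' hU'open
      by_contra hcon
      push_neg at hcon
      apply this
      ext y
      constructor
      · rintro ⟨hy1, hy2⟩
        by_contra hyx
        exact hyx (hcon y ⟨hU'U hy1, hy2⟩)
      · rintro rfl
        exact ⟨hxU', hxA⟩
    have hdiff : A \ derivedSet A = ∅ := Set.diff_eq_empty.mpr hsub
    have : derivedSet A = ∅ := by
      rw [h A, hdiff]
      ext y
      simp [mem_derivedSet, AccPt]
    obtain ⟨x, hx⟩ := hA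
    exact absurd (hsub hx) (by simp [this])
end

section
/- For any topological space X, the following are equivalent: (i) every point x ∈ X is an intersection of an open set and a closed set, i.e., there exist an open set U and a closed set C with {x} = U ∩ C; (ii) for every subset A ⊆ X, the derived set d(A) is closed. -/
open Topology Filter Set

/-- For any topological space `X`, the following are equivalent:
(i) every point is the intersection of an open set and a closed set;
(ii) every derived set is closed. (`T_d`-spaces.) -/
theorem td_space_characterization {X : Type*} [TopologicalSpace X] :
    (∀ x : X, ∃ U C : Set X, IsOpen U ∧ IsClosed C ∧ ({x} : Set X) = U ∩ C) ↔
      (∀ A : Set X, IsClosed (derivedSet A)) := by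
  constructor
  · intro h A
    rw [← isOpen_compl_iff, isOpen_iff_mem_nhds]
    intro x hx
    rw [Set.mem_compl_iff, mem_derivedSet, accPt_iff_nhds] at hx
    push_neg at hx
    obtain ⟨U, hU, hUA⟩ := hx
    obtain ⟨V, C, hV, hC, hVC⟩ := h x
    have hxV : x ∈ V ∧ x ∈ C := by
      rw [← Set.mem_inter_iff, ← hVC]; rfl
    have hmem : interior U ∩ V ∈ 𝓝 x :=
      Filter.inter_mem (interior_mem_nhds.2 hU) (hV.mem_nhds hxV.1)
    refine Filter.mem_of_superset hmem fun y hy hyD => ?_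
    obtain ⟨hyU, hyV⟩ := hy
    rw [mem_derivedSet, accPt_iff_nhds] at hyD
    by_cases hyx : y = x
    · subst hyx
      obtain ⟨z, ⟨hzU, hzA⟩, hzy⟩ := hyD U hU
      exact hzy (hUA z ⟨hzU, hzA⟩)
    · have hyC : y ∉ C := fun hyC => hyx (by
        have : y ∈ V ∩ C := ⟨hyV, hyC⟩
        rw [← hVC] at this; exact this)
      have : interior U ∩ Cᶜ ∈ 𝓝 y :=
        Filter.inter_mem ((isOpen_interior.mem_nhds hyU))
          ((hC.isOpen_compl.mem_nhds hyC))
      obtain ⟨z, ⟨⟨hzU, hzC⟩, hzA⟩, hzy⟩ := hyD _ this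
      have : z = x := hUA z ⟨interior_subset hzU, hzA⟩
      exact hzC (this ▸ hxV.2)
  · intro h x
    refine ⟨(derivedSet {x})ᶜ, closure {x}, (h {x}).isOpen_compl, isClosed_closure, ?_⟩
    apply Set.eq_of_subset_of_subset
    · rintro y rfl
      refine ⟨?_, subset_closure rfl⟩
      rw [Set.mem_compl_iff, mem_derivedSet, accPt_iff_nhds]
      push_neg
      exact ⟨Set.univ, Filter.univ_mem, fun z hz => hz.2⟩
    · rintro y ⟨hyD, hyC⟩
      by_contra hyx
      apply hyD
      rw [mem_derivedSet, accPt_iff_nhds]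
      intro U hU
      rw [mem_closure_iff_nhds] at hyC
      obtain ⟨z, hzU, hzx⟩ := hyC U hU
      exact ⟨z, ⟨hzU, hzx⟩, fun hzy => hyx (by rw [← hzy]; exact hzx)⟩
end

section
/- Every scattered topological space is a T_d-space: if X is scattered, then for every subset A ⊆ X the derived set d(A) is closed. -/
section

variable {X : Type*} [TopologicalSpace X]

theorem mem_derivedSet_iff_mem_closure_diff_singleton {A : Set X} {x : X} :
    x ∈ derivedSet A ↔ x ∈ closure (A \ {x}) := by
  rw [mem_derivedSet, accPt_iff_frequently_nhdsNE, mem_closure_ne_iff_frequently_within]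

theorem IsScattered.isLocallyClosed_singleton (hX : IsScattered X) (x : X) :
    IsLocallyClosed ({x} : Set X) := by
  obtain ⟨z, hz, V, hV, hVz⟩ := hX (closure {x}) ⟨x, subset_closure rfl⟩
  have hxV : x ∈ V := by
    obtain ⟨w, hwV, rfl⟩ := mem_closure_iff.mp hz V hV (hVz.ge rfl).1
    exact hwV
  obtain rfl : x = z := hVz.le ⟨hxV, subset_closure rfl⟩
  exact ⟨V, closure {x}, hV, isClosed_closure, hVz.symm⟩

theorem mem_derivedSet_of_mem_derivedSet_derivedSet {A : Set X} {x : X}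
    (hx : IsLocallyClosed ({x} : Set X)) (h : x ∈ derivedSet (derivedSet A)) :
    x ∈ derivedSet A := by
  have hO : IsOpen ({x} ∪ (closure {x})ᶜ) := by
    rw [← coborder_eq_union_closure_compl]; exact hx.isOpen_coborder
  have hP : IsOpen (closure ({x} : Set X))ᶜ := isClosed_closure.isOpen_compl
  have hPA : (closure {x})ᶜ ∩ A ⊆ A \ {x} := fun y ⟨hyP, hyA⟩ ↦
    ⟨hyA, fun hyx ↦ hyP (hyx ▸ subset_closure rfl)⟩
  rw [mem_derivedSet_iff_mem_closure_diff_singleton] at h ⊢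
  have key : closure (({x} ∪ (closure {x})ᶜ) ∩ (derivedSet A \ {x})) ⊆ closure (A \ {x}) :=
    calc closure (({x} ∪ (closure {x})ᶜ) ∩ (derivedSet A \ {x}))
        ⊆ closure ((closure {x})ᶜ ∩ closure A) :=
          closure_mono fun y ⟨hyO, hyA, hyx⟩ ↦
            ⟨hyO.resolve_left hyx, derivedSet_subset_closure A hyA⟩
      _ ⊆ closure (closure ((closure {x})ᶜ ∩ A)) := closure_mono hP.inter_closure
      _ ⊆ closure (A \ {x}) := by rw [closure_closure]; exact closure_mono hPA
  exact key (hO.inter_closure ⟨Or.inl rfl, h⟩)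

theorem isClosed_derivedSet_of_isLocallyClosed_singleton
    (h : ∀ x : X, IsLocallyClosed ({x} : Set X)) (A : Set X) : IsClosed (derivedSet A) :=
  (isClosed_iff_derivedSet_subset _).mpr fun x hx ↦
    mem_derivedSet_of_mem_derivedSet_derivedSet (h x) hx

end

/-- Every scattered space is a `T_d`-space: all derived sets
are closed. -/
theorem scattered_isClosed_derivedSet {X : Type*} [TopologicalSpace X]
    (hX : IsScattered X) : ∀ A : Set X, IsClosed (derivedSet A) :=
  isClosed_derivedSet_of_isLocallyClosed_singleton hX.isLocallyClosed_singleton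
end

section
/- Let X be a set and δ : Set X → Set X an operator satisfying the Magari laws: δ(∅) = ∅, δ(A ∪ B) = δ(A) ∪ δ(B), and δ(A) = δ(A \ δ(A)) for all A, B ⊆ X. Then there exists a unique topology τ on X such that δ coincides with the derived-set operator of τ (i.e., δ(A) = d_τ(A) for all A ⊆ X); moreover, this topology τ is scattered. -/
/-!
The closed sets of the topology are the sets `C` with `δ C ⊆ C`. The law `δ A = δ (A \ δ A)`
gives both `δ (δ A) ⊆ δ A`, so that the closure of `A` is `A ∪ δ A`, and `x ∉ δ {x}`, so that
`x ∈ δ A` depends only on `A \ {x}`; together these say that `δ` is the derived-set operator.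
Uniqueness holds because a topology is determined by its derived sets through its closed sets.
Scatteredness: a nonempty `A` cannot lie inside `δ A`, since then `δ A = δ ∅ = ∅`, and a point
of `A \ δ A` is isolated in `A`.
-/

open Set Topology

/-- Scatteredness of an explicitly given topology `t` on `X`: every nonempty
subset has a point isolated in it. -/
def IsScatteredTop {X : Type*} (t : TopologicalSpace X) : Prop :=
  ∀ A : Set X, A.Nonempty → ∃ x ∈ A, ∃ U : Set X, @IsOpen X t U ∧ U ∩ A = {x}

theorem TopologicalSpace.ext_derivedSet {X : Type*} {t₁ t₂ : TopologicalSpace X}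
    (h : ∀ A, @derivedSet X t₁ A = @derivedSet X t₂ A) : t₁ = t₂ :=
  TopologicalSpace.ext_isClosed fun C => by
    rw [@isClosed_iff_derivedSet_subset X t₁, @isClosed_iff_derivedSet_subset X t₂, h]

theorem exists_isOpen_inter_eq_singleton_of_notMem_derivedSet {X : Type*} [TopologicalSpace X]
    {A : Set X} {x : X} (hxA : x ∈ A) (hx : x ∉ derivedSet A) :
    ∃ U : Set X, IsOpen U ∧ U ∩ A = {x} := by
  rw [mem_derivedSet, accPt_iff_nhds] at hx
  push Not at hx
  obtain ⟨N, hN, hNA⟩ := hx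
  obtain ⟨U, hUN, hU, hxU⟩ := mem_nhds_iff.1 hN
  refine ⟨U, hU, subset_antisymm (fun y hy => hNA y ⟨hUN hy.1, hy.2⟩) ?_⟩
  exact singleton_subset_iff.2 ⟨hxU, hxA⟩

theorem isScatteredTop_of_derivedSet_eq_derivedSet_diff {X : Type*} [t : TopologicalSpace X]
    (h : ∀ A : Set X, derivedSet A = derivedSet (A \ derivedSet A)) : IsScatteredTop t := by
  intro A hA
  have hdiff : (A \ derivedSet A).Nonempty := by
    rw [nonempty_iff_ne_empty]
    intro hempty
    have hderived : derivedSet A = ∅ := by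
      rw [h, hempty]
      exact subset_empty_iff.1 ((derivedSet_subset_closure _).trans closure_empty.subset)
    rw [hderived, sdiff_empty] at hempty
    exact hA.ne_empty hempty
  obtain ⟨x, hxA, hx⟩ := hdiff
  exact ⟨x, hxA, exists_isOpen_inter_eq_singleton_of_notMem_derivedSet hxA hx⟩

structure IsMagari {X : Type*} (δ : Set X → Set X) : Prop where
  map_empty : δ ∅ = ∅
  map_union : ∀ A B, δ (A ∪ B) = δ A ∪ δ B
  map_eq_map_diff : ∀ A, δ A = δ (A \ δ A)

namespace IsMagari

variable {X : Type*} {δ : Set X → Set X}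

theorem monotone (hδ : IsMagari δ) : Monotone δ := by
  intro A B hAB
  have h := hδ.map_union A B
  rw [union_eq_right.2 hAB] at h
  rw [h]
  exact subset_union_left

theorem map_map_subset (hδ : IsMagari δ) (A : Set X) : δ (δ A) ⊆ δ A := by
  have h : δ (A ∪ δ A) ⊆ δ A := by
    rw [hδ.map_eq_map_diff, hδ.map_union]
    refine hδ.monotone fun x ⟨hxA, hxδ⟩ => ?_
    exact hxA.resolve_right fun hx => hxδ (Or.inl hx)
  rw [hδ.map_union] at h
  exact subset_union_right.trans h

theorem notMem_map_singleton (hδ : IsMagari δ) (x : X) : x ∉ δ {x} := by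
  intro hx
  have h : ({x} : Set X) \ δ {x} = ∅ := sdiff_eq_empty.2 (singleton_subset_iff.2 hx)
  rw [hδ.map_eq_map_diff, h, hδ.map_empty] at hx
  exact hx

theorem mem_map_diff_singleton_iff (hδ : IsMagari δ) {A : Set X} {x : X} :
    x ∈ δ (A \ {x}) ↔ x ∈ δ A := by
  refine ⟨fun hx => hδ.monotone sdiff_subset hx, fun hx => ?_⟩
  have hA : A ⊆ (A \ {x}) ∪ {x} := by simp
  have h := hδ.monotone hA hx
  rw [hδ.map_union] at h
  exact h.resolve_right (hδ.notMem_map_singleton x)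

abbrev topology (hδ : IsMagari δ) : TopologicalSpace X :=
  .ofClosed {C | δ C ⊆ C} (by simp [hδ.map_empty])
    (fun S hS => subset_sInter fun C hC => (hδ.monotone (sInter_subset_of_mem hC)).trans (hS hC))
    (fun A hA B hB => by
      simp only [mem_ofPred_eq, hδ.map_union]
      exact union_subset_union hA hB)

theorem isClosed_topology_iff (hδ : IsMagari δ) {C : Set X} :
    IsClosed[hδ.topology] C ↔ δ C ⊆ C := by
  let _ := hδ.topology
  rw [← isOpen_compl_iff]
  show δ Cᶜᶜ ⊆ Cᶜᶜ ↔ _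
  rw [compl_compl]

theorem closure_topology (hδ : IsMagari δ) (A : Set X) : closure[hδ.topology] A = A ∪ δ A := by
  let _ := hδ.topology
  refine subset_antisymm (closure_minimal subset_union_left ?_) (union_subset subset_closure ?_)
  · rw [hδ.isClosed_topology_iff, hδ.map_union]
    exact union_subset subset_union_right (subset_union_of_subset_right (hδ.map_map_subset A) A)
  · exact (hδ.monotone subset_closure).trans (hδ.isClosed_topology_iff.1 isClosed_closure)

theorem derivedSet_topology (hδ : IsMagari δ) (A : Set X) : @derivedSet X hδ.topology A = δ A := by
  let _ := hδ.topology
  ext x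
  rw [mem_derivedSet, accPt_principal_iff_clusterPt, ← mem_closure_iff_clusterPt,
    hδ.closure_topology, ← hδ.mem_map_diff_singleton_iff]
  simp

end IsMagari

/-- If `δ : Set X → Set X` satisfies the Magari laws, then there
is a unique topology `t` on `X` whose derived-set operator coincides with `δ`;
moreover, any such topology is scattered. -/
theorem magari_unique_scattered_topology {X : Type*} (δ : Set X → Set X)
    (h1 : δ ∅ = ∅)
    (h2 : ∀ A B : Set X, δ (A ∪ B) = δ A ∪ δ B)
    (h3 : ∀ A : Set X, δ A = δ (A \ δ A)) :
    (∃! t : TopologicalSpace X, ∀ A : Set X, δ A = @derivedSet X t A) ∧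
      (∀ t : TopologicalSpace X, (∀ A : Set X, δ A = @derivedSet X t A) →
        IsScatteredTop t) := by
  have hδ : IsMagari δ := ⟨h1, h2, h3⟩
  refine ⟨⟨hδ.topology, fun A => (hδ.derivedSet_topology A).symm, fun t ht => ?_⟩, fun t ht => ?_⟩
  · exact TopologicalSpace.ext_derivedSet fun A => by rw [← ht, hδ.derivedSet_topology]
  · exact isScatteredTop_of_derivedSet_eq_derivedSet_diff fun A => by simp only [← ht]; exact h3 A
end

section
/- Let X and Y be topological spaces and f : X → Y a d-map, i.e., f is continuous, open, and each fiber f⁻¹({y}) is a discrete subspace of X. Then for every subset A ⊆ Y, f⁻¹(d_Y(A)) = d_X(f⁻¹(A)), where d_X and d_Y denote the derived-set operators of X and Y. -/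
open Topology Filter Set


/-- If `f : X → Y` is a d-map (continuous, open, with discrete
fibers), then `f⁻¹(d_Y A) = d_X (f⁻¹ A)` for every `A ⊆ Y`. -/
theorem dmap_preimage_derivedSet {X Y : Type*} [TopologicalSpace X] [TopologicalSpace Y]
    (f : X → Y) (hcont : Continuous f) (hopen : IsOpenMap f)
    (hdisc : ∀ y : Y, DiscreteTopology (f ⁻¹' {y} : Set X)) :
    ∀ A : Set Y, f ⁻¹' derivedSet A = derivedSet (f ⁻¹' A) := by
  intro A
  ext x
  have hW : (f ⁻¹' {f x} \ {x})ᶜ ∈ 𝓝 x := by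
    have h := (discreteTopology_subtype_iff.mp (hdisc (f x))) x rfl
    rw [nhdsWithin, inf_assoc, inf_principal, inf_principal_eq_bot] at h
    simpa [Set.diff_eq, Set.inter_comm] using h
  simp only [Set.mem_preimage, mem_derivedSet, accPt_iff_nhds]
  constructor
  · intro hx U hU
    obtain ⟨O, hOsub, hOopen, hxO⟩ := mem_nhds_iff.mp (Filter.inter_mem hU hW)
    obtain ⟨a, ⟨haO, haA⟩, hane⟩ := hx (f '' O) ((hopen O hOopen).mem_nhds ⟨x, hxO, rfl⟩)
    obtain ⟨z, hzO, hfz⟩ := haO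
    refine ⟨z, ⟨(hOsub hzO).1, by simpa [hfz] using haA⟩, ?_⟩
    rintro rfl; exact hane hfz.symm
  · intro hx V hV
    have hU : f ⁻¹' V ∩ (f ⁻¹' {f x} \ {x})ᶜ ∈ 𝓝 x :=
      Filter.inter_mem (hcont.continuousAt.preimage_mem_nhds hV) hW
    obtain ⟨z, ⟨⟨hzV, hzc⟩, hzA⟩, hzne⟩ := hx _ hU
    refine ⟨f z, ⟨hzV, hzA⟩, fun h => hzc ⟨h, hzne⟩⟩
end

section
/- Let X and Y be topological spaces and f : X → Y a d-map, i.e., f is continuous, open, and each fiber f⁻¹({y}) is a discrete subspace of X. Let D_X : Ordinal → Set X and D_Y : Ordinal → Set Y be the Cantor–Bendixson sequences of X and Y respectively (D(0) = whole space, D(α+1) = derived set of D(α), D(λ) = ⋂_{β<λ} D(β) for limit λ). Then for every ordinal α, D_X(α) = f⁻¹(D_Y(α)). -/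
universe u

/-!
An open map pulls accumulation points back. Conversely, if `x` is isolated in its fibre, the
points near `x` other than `x` itself are mapped away from `f x`, so a continuous map pushes
accumulation points at `x` forward. Hence preimages under a d-map commute with the derived set,
and transfinite induction carries this along the Cantor–Bendixson sequences, preimages commuting
with the intersections taken at limit stages.
-/

open Filter Topology

section

variable {X Y : Type*} [TopologicalSpace X] {f : X → Y}

theorem eventually_nhdsNE_ne_of_discreteTopology_fiber {x : X}
    (hx : DiscreteTopology (f ⁻¹' {f x} : Set X)) :
    ∀ᶠ z in 𝓝[≠] x, f z ≠ f x :=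
  inf_principal_eq_bot.mp (discreteTopology_subtype_iff.mp hx x rfl)

variable [TopologicalSpace Y]

theorem AccPt.map_preimage_of_eventually_ne {x : X} {A : Set Y}
    (h : AccPt x (𝓟 (f ⁻¹' A))) (hf : ContinuousAt f x) (hx : ∀ᶠ z in 𝓝[≠] x, f z ≠ f x) :
    AccPt (f x) (𝓟 A) := by
  rw [accPt_iff_frequently] at h ⊢
  have hfx : ∀ᶠ z in 𝓝 x, z ≠ x → f z ≠ f x := eventually_nhdsWithin_iff.mp hx
  exact hf.frequently (h.mp (hfx.mono fun z hz ⟨hzx, hzA⟩ => ⟨hz hzx, hzA⟩))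

theorem IsOpenMap.preimage_derivedSet_subset (hf : IsOpenMap f) (A : Set Y) :
    f ⁻¹' derivedSet A ⊆ derivedSet (f ⁻¹' A) := fun _ hx => by
  simpa only [mem_derivedSet, comap_principal] using hf.accPt_comap hx

theorem Continuous.derivedSet_preimage_subset (hf : Continuous f)
    (hfib : ∀ y, DiscreteTopology (f ⁻¹' {y} : Set X)) (A : Set Y) :
    derivedSet (f ⁻¹' A) ⊆ f ⁻¹' derivedSet A := fun x hx =>
  AccPt.map_preimage_of_eventually_ne hx hf.continuousAt
    (eventually_nhdsNE_ne_of_discreteTopology_fiber (hfib (f x)))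

theorem derivedSet_preimage_of_isOpenMap (hcont : Continuous f) (hopen : IsOpenMap f)
    (hfib : ∀ y, DiscreteTopology (f ⁻¹' {y} : Set X)) (A : Set Y) :
    derivedSet (f ⁻¹' A) = f ⁻¹' derivedSet A :=
  (hcont.derivedSet_preimage_subset hfib A).antisymm (hopen.preimage_derivedSet_subset A)

end

/-- If `f : X → Y` is a d-map (continuous, open, with discrete
fibers) and `D_X`, `D_Y` are the Cantor–Bendixson sequences of `X` and `Y`,
then `D_X α = f⁻¹(D_Y α)` for every ordinal `α`. -/
theorem dmap_preimage_cantorBendixson {X Y : Type u} [TopologicalSpace X] [TopologicalSpace Y]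
    (f : X → Y) (hcont : Continuous f) (hopen : IsOpenMap f)
    (hdisc : ∀ y : Y, DiscreteTopology (f ⁻¹' {y} : Set X))
    (DX : Ordinal.{u} → Set X) (DY : Ordinal.{u} → Set Y)
    (hX0 : DX 0 = Set.univ)
    (hXsucc : ∀ α : Ordinal.{u}, DX (α + 1) = derivedSet (DX α))
    (hXlim : ∀ l : Ordinal.{u}, Order.IsSuccLimit l → DX l = ⋂ β < l, DX β)
    (hY0 : DY 0 = Set.univ)
    (hYsucc : ∀ α : Ordinal.{u}, DY (α + 1) = derivedSet (DY α))
    (hYlim : ∀ l : Ordinal.{u}, Order.IsSuccLimit l → DY l = ⋂ β < l, DY β) :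
    ∀ α : Ordinal.{u}, DX α = f ⁻¹' DY α := by
  intro α
  induction α using Ordinal.limitRecOn with
  | zero => rw [hX0, hY0, Set.preimage_univ]
  | add_one β ih => rw [hXsucc, hYsucc, ih, derivedSet_preimage_of_isOpenMap hcont hopen hdisc]
  | limit l hl ih =>
    rw [hXlim l hl, hYlim l hl, Set.preimage_iInter₂]
    exact Set.iInter₂_congr ih
end

section
/- Let X be a scattered topological space with derived-set operator d and interior operator int. Then the following are equivalent: (i) X validates the linearity axiom (lin), i.e., for all subsets P, Q ⊆ X and every point x ∈ X, if x ∉ d((int(P) ∪ int(Q))ᶜ) then x ∉ d(Pᶜ) or x ∉ d(Qᶜ); (ii) X is primal, i.e., for every x ∈ X and all open sets U, V ⊆ X, if {x} ∪ U ∪ V is open then {x} ∪ U is open or {x} ∪ V is open. -/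
lemma not_mem_derivedSet_iff {X : Type*} [TopologicalSpace X] {S : Set X} {x : X} :
    x ∉ derivedSet S ↔ ∃ G : Set X, IsOpen G ∧ x ∈ G ∧ G ∩ S ⊆ {x} := by
  rw [mem_derivedSet, accPt_iff_nhds]
  constructor
  · intro h
    push_neg at h
    obtain ⟨U, hU, hU2⟩ := h
    obtain ⟨G, hGU, hGopen, hxG⟩ := mem_nhds_iff.mp hU
    exact ⟨G, hGopen, hxG, fun y hy => by
      have := hU2 y ⟨hGU hy.1, hy.2⟩
      simpa using this⟩
  · rintro ⟨G, hGopen, hxG, hsub⟩ h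
    obtain ⟨y, hy, hyx⟩ := h G (hGopen.mem_nhds hxG)
    exact hyx (hsub hy)

/-- A scattered space validates the linearity axiom (lin),
`□(□⁺p ∨ □⁺q) → □p ∨ □q` under d-semantics, iff it is primal: for every
point `x` and open `U`, `V`, if `{x} ∪ U ∪ V` is open then `{x} ∪ U` or
`{x} ∪ V` is open. -/
theorem lin_iff_primal {X : Type*} [TopologicalSpace X] (hX : IsScattered X) :
    (∀ P Q : Set X, ∀ x : X,
        x ∉ derivedSet ((interior P ∪ interior Q)ᶜ) →
          x ∉ derivedSet Pᶜ ∨ x ∉ derivedSet Qᶜ) ↔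
      (∀ x : X, ∀ U V : Set X, IsOpen U → IsOpen V →
        IsOpen ({x} ∪ U ∪ V) → IsOpen ({x} ∪ U) ∨ IsOpen ({x} ∪ V)) := by
  constructor
  · intro hlin x U V hU hV hUV
    have key : x ∉ derivedSet ((interior ({x} ∪ U) ∪ interior ({x} ∪ V))ᶜ) := by
      rw [not_mem_derivedSet_iff]
      refine ⟨{x} ∪ U ∪ V, hUV, Or.inl (Or.inl rfl), ?_⟩
      intro y ⟨hy1, hy2⟩
      simp only [Set.mem_compl_iff, Set.mem_union, not_or] at hy2
      rcases hy1 with (h | h) | h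
      · exact h
      · exact absurd (interior_maximal (Set.subset_union_right) hU h) hy2.1
      · exact absurd (interior_maximal (Set.subset_union_right) hV h) hy2.2
    rcases hlin ({x} ∪ U) ({x} ∪ V) x key with h | h <;>
      rw [not_mem_derivedSet_iff] at h
    · left
      obtain ⟨G, hGopen, hxG, hsub⟩ := h
      have hGsub : G ⊆ {x} ∪ U := by
        intro y hy
        by_contra hyn
        have : y ∈ ({x} : Set X) := hsub ⟨hy, hyn⟩
        exact hyn (Or.inl this)
      have : ({x} : Set X) ∪ U = G ∪ U := by
        apply Set.Subset.antisymm
        · exact Set.union_subset (Set.singleton_subset_iff.mpr (Or.inl hxG)) Set.subset_union_right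
        · exact Set.union_subset hGsub Set.subset_union_right
      rw [this]; exact hGopen.union hU
    · right
      obtain ⟨G, hGopen, hxG, hsub⟩ := h
      have hGsub : G ⊆ {x} ∪ V := by
        intro y hy
        by_contra hyn
        have : y ∈ ({x} : Set X) := hsub ⟨hy, hyn⟩
        exact hyn (Or.inl this)
      have : ({x} : Set X) ∪ V = G ∪ V := by
        apply Set.Subset.antisymm
        · exact Set.union_subset (Set.singleton_subset_iff.mpr (Or.inl hxG)) Set.subset_union_right
        · exact Set.union_subset hGsub Set.subset_union_right
      rw [this]; exact hGopen.union hV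
  · intro hprim P Q x hx
    rw [not_mem_derivedSet_iff] at hx
    obtain ⟨W, hWopen, hxW, hsub⟩ := hx
    set U : Set X := W ∩ interior P with hUdef
    set V : Set X := W ∩ interior Q with hVdef
    have hWeq : ({x} : Set X) ∪ U ∪ V = W := by
      apply Set.Subset.antisymm
      · refine Set.union_subset (Set.union_subset ?_ Set.inter_subset_left)
          Set.inter_subset_left
        exact Set.singleton_subset_iff.mpr hxW
      · intro y hyW
        by_cases hyx : y = x
        · exact Or.inl (Or.inl (hyx ▸ rfl))
        · have : y ∈ interior P ∪ interior Q := by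
            by_contra hc
            exact hyx (hsub ⟨hyW, hc⟩)
          rcases this with h | h
          · exact Or.inl (Or.inr ⟨hyW, h⟩)
          · exact Or.inr ⟨hyW, h⟩
    have hUo : IsOpen U := hWopen.inter isOpen_interior
    have hVo : IsOpen V := hWopen.inter isOpen_interior
    rcases hprim x U V hUo hVo (hWeq ▸ hWopen) with h | h
    · left
      rw [not_mem_derivedSet_iff]
      refine ⟨{x} ∪ U, h, Or.inl rfl, ?_⟩
      rintro y ⟨(h1 | h1), h2⟩
      · exact h1
      · exact absurd (interior_subset h1.2) h2
    · right
      rw [not_mem_derivedSet_iff]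
      refine ⟨{x} ∪ V, h, Or.inl rfl, ?_⟩
      rintro y ⟨(h1 | h1), h2⟩
      · exact h1
      · exact absurd (interior_subset h1.2) h2
end

section
/- Let (X, τ) be a Hausdorff, first-countable topological space. Then the derivative topology τ⁺ is discrete: every subset of X (equivalently, every singleton) is open in τ⁺. -/
open Filter Topology Set

/-- The derivative topology `τ⁺` of a topology `t`: the topology generated by
the `t`-open sets together with all derived sets `d_t(A)`, `A ⊆ X`. -/
def derivTopology {X : Type*} (t : TopologicalSpace X) : TopologicalSpace X :=
  TopologicalSpace.generateFrom
    ({U : Set X | @IsOpen X t U} ∪ {S : Set X | ∃ A : Set X, S = @derivedSet X t A})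

/-! By first countability, a point `x` that is not isolated is the limit of a sequence `a` in
`X \ {x}`, and in a Hausdorff space the range of such a sequence accumulates only at `x`: the
terms outside a neighbourhood `v` of `x` form a finite set, which has no accumulation points,
and the others lie in `v`. So `{x} = d(range a)` is open in `τ⁺`, while an isolated point is
already `τ`-open. -/

section

variable {X : Type*} [TopologicalSpace X]

theorem Set.Finite.derivedSet_eq_empty [T1Space X] {s : Set X} (hs : s.Finite) :
    derivedSet s = ∅ :=
  eq_empty_of_forall_notMem fun _ hx => (Infinite.of_accPt hx) hs

theorem mem_derivedSet_range_of_tendsto {ι : Type*} {l : Filter ι} [l.NeBot] {a : ι → X}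
    {x : X} (ha : Tendsto a l (𝓝[≠] x)) : x ∈ derivedSet (range a) :=
  have hrange : Tendsto a l (𝓟 (range a)) := tendsto_principal.2 (.of_forall mem_range_self)
  (tendsto_inf.2 ⟨ha, hrange⟩).neBot

theorem derivedSet_range_subset_closure [T1Space X] {ι : Type*} {a : ι → X} {x : X}
    (ha : Tendsto a cofinite (𝓝 x)) {v : Set X} (hv : v ∈ 𝓝 x) :
    derivedSet (range a) ⊆ closure v := by
  have hfin : (a ⁻¹' v)ᶜ.Finite := ha hv
  have hsplit : range a ⊆ a '' (a ⁻¹' v)ᶜ ∪ v := by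
    rintro _ ⟨n, rfl⟩
    by_cases h : a n ∈ v
    · exact Or.inr h
    · exact Or.inl (mem_image_of_mem a h)
  calc derivedSet (range a) ⊆ derivedSet (a '' (a ⁻¹' v)ᶜ) ∪ derivedSet v := by
        rw [← derivedSet_union]; exact derivedSet_mono _ _ hsplit
    _ = derivedSet v := by rw [(hfin.image a).derivedSet_eq_empty, empty_union]
    _ ⊆ closure v := derivedSet_subset_closure v

theorem derivedSet_range_eq_singleton [T2Space X] {ι : Type*} [Infinite ι] {a : ι → X} {x : X}
    (ha : Tendsto a cofinite (𝓝[≠] x)) : derivedSet (range a) = {x} := by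
  refine Subset.antisymm (fun y hy => ?_)
    (singleton_subset_iff.2 (mem_derivedSet_range_of_tendsto ha))
  by_contra hyx
  obtain ⟨u, hu, v, hv, huv⟩ := Filter.disjoint_iff.1 (disjoint_nhds_nhds.2 hyx)
  obtain ⟨z, hzu, hzv⟩ := mem_closure_iff_nhds.1
    (derivedSet_range_subset_closure (tendsto_nhds_of_tendsto_nhdsWithin ha) hv hy) u hu
  exact huv.le_bot ⟨hzu, hzv⟩

theorem discreteTopology_derivTopology [T2Space X] [FirstCountableTopology X] :
    @DiscreteTopology X (derivTopology ‹_›) := by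
  refine @discreteTopology_iff_isOpen_singleton X (derivTopology ‹_›) |>.2 fun x => ?_
  by_cases hx : IsOpen {x}
  · exact TopologicalSpace.isOpen_generateFrom_of_mem (Or.inl hx)
  · have : (𝓝[≠] x).NeBot := ⟨mt (isOpen_singleton_iff_punctured_nhds x).2 hx⟩
    obtain ⟨a, ha⟩ := exists_seq_tendsto (𝓝[≠] x)
    exact TopologicalSpace.isOpen_generateFrom_of_mem
      (Or.inr ⟨range a, (derivedSet_range_eq_singleton (Nat.cofinite_eq_atTop ▸ ha)).symm⟩)

end

/-- If `(X, t)` is Hausdorff and first-countable, then the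
derivative topology `t⁺` is discrete: every subset of `X` is `t⁺`-open. -/
theorem derivTopology_discrete_of_t2_firstCountable {X : Type*} (t : TopologicalSpace X)
    (h2 : @T2Space X t) (hfc : @FirstCountableTopology X t) :
    ∀ s : Set X, @IsOpen X (derivTopology t) s :=
  @isOpen_discrete X (derivTopology t) discreteTopology_derivTopology
end

section
/- Let (X, τ) be any topological space. Then the derivative topology τ⁺ is T₁: every singleton {x} ⊆ X is closed with respect to τ⁺. -/
/-!
The complement of `{x}` splits into the points of `closure {x}` other than `x`, which form the
derived set of `{x}`, and the complement of `closure {x}`, which is `τ`-open. Both pieces are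
`τ⁺`-open.
-/

open Set Filter Topology

section DerivedSet

variable {X : Type*} [TopologicalSpace X]

theorem derivedSet_singleton (x : X) : derivedSet {x} = closure {x} \ {x} := by
  ext y
  rw [mem_derivedSet, accPt_principal_iff_clusterPt, Set.mem_sdiff, mem_singleton_iff,
    mem_closure_iff_clusterPt]
  by_cases hyx : y = x
  · subst hyx
    simp only [sdiff_self, principal_empty, not_true_eq_false, and_false, iff_false]
    exact fun h => h.ne (inf_bot_eq _)
  · rw [sdiff_singleton_eq_self (mem_singleton_iff.not.mpr hyx)]
    simp only [hyx, not_false_eq_true, and_true]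

theorem compl_singleton_eq_derivedSet_union_compl_closure (x : X) :
    ({x} : Set X)ᶜ = derivedSet {x} ∪ (closure {x})ᶜ := by
  rw [derivedSet_singleton]
  ext y
  by_cases hy : y ∈ closure {x}
  · simp [hy]
  · have hyx : y ≠ x := fun h => hy (h ▸ subset_closure rfl)
    simp [hy, hyx]

end DerivedSet

section DerivTopology

variable {X : Type*} (t : TopologicalSpace X)

theorem isOpen_derivTopology_of_isOpen {U : Set X} (hU : IsOpen[t] U) :
    IsOpen[derivTopology t] U :=
  TopologicalSpace.GenerateOpen.basic _ (Or.inl hU)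

theorem isOpen_derivTopology_derivedSet (A : Set X) :
    IsOpen[derivTopology t] (@derivedSet X t A) :=
  TopologicalSpace.GenerateOpen.basic _ (Or.inr ⟨A, rfl⟩)

end DerivTopology

/-- For any topological space `(X, t)`, the derivative topology
`t⁺` is T₁: every singleton is `t⁺`-closed. -/
theorem derivTopology_t1 {X : Type*} (t : TopologicalSpace X) :
    ∀ x : X, @IsClosed X (derivTopology t) {x} := by
  intro x
  rw [← @isOpen_compl_iff X _ (derivTopology t),
    @compl_singleton_eq_derivedSet_union_compl_closure X t x]
  exact @IsOpen.union X _ _ (derivTopology t)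
    (isOpen_derivTopology_derivedSet t {x})
    (isOpen_derivTopology_of_isOpen t (@isClosed_closure X t {x}).isOpen_compl)
end

section
/- Let X be a T_d topological space (every derived set is closed) with derived-set operator d, and let x ∈ X be doubly d-reflexive, i.e., x ∈ d(X) and for all A, B ⊆ X, x ∈ d(A) ∩ d(B) implies x ∈ d(d(A) ∩ d(B)). Then x is m-fold d-reflexive for every finite m ≥ 1: for any subsets A₁, …, A_m ⊆ X, if x ∈ d(A₁) ∩ ⋯ ∩ d(A_m) then x ∈ d(d(A₁) ∩ ⋯ ∩ d(A_m)). -/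
/-- In a `T_d`-space (all derived sets are closed), every doubly
d-reflexive point is m-fold d-reflexive for every finite `m ≥ 1`. -/
theorem doubly_reflexive_mfold {X : Type*} [TopologicalSpace X]
    (hTd : ∀ A : Set X, IsClosed (derivedSet A)) (x : X)
    (hx1 : x ∈ derivedSet (Set.univ : Set X))
    (hx2 : ∀ A B : Set X, x ∈ derivedSet A ∩ derivedSet B →
      x ∈ derivedSet (derivedSet A ∩ derivedSet B)) :
    ∀ m : ℕ, 1 ≤ m → ∀ A : Fin m → Set X,
      x ∈ ⋂ i, derivedSet (A i) → x ∈ derivedSet (⋂ i, derivedSet (A i)) := by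
  intro m
  induction m with
  | zero => intro h; omega
  | succ n ih =>
    intro _ A hxA
    rcases Nat.eq_zero_or_pos n with rfl | hn
    · have h0 : x ∈ derivedSet (A 0) := by
        have := Set.mem_iInter.mp hxA 0; exact this
      have := hx2 (A 0) (A 0) ⟨h0, h0⟩
      have hsub : derivedSet (A 0) ∩ derivedSet (A 0) ⊆ ⋂ i, derivedSet (A i) := by
        intro y hy
        simp only [Set.mem_iInter]
        intro i
        have : i = 0 := Fin.fin_one_eq_zero i
        rw [this]; exact hy.1
      exact derivedSet_mono _ _ hsub this
    · -- split off index 0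
      set S : Set X := ⋂ i : Fin n, derivedSet (A i.succ) with hS
      have hxS : x ∈ S := by
        simp only [hS, Set.mem_iInter]
        intro i
        exact Set.mem_iInter.mp hxA i.succ
      have hxdS : x ∈ derivedSet S := by
        have := ih hn (fun i => A i.succ)
        simpa [hS] using this (by simpa [hS] using hxS)
      have hSclosed : IsClosed S := isClosed_iInter (fun i => hTd _)
      have hdSsub : derivedSet S ⊆ S :=
        (derivedSet_subset_closure S).trans hSclosed.closure_subset
      have h0 : x ∈ derivedSet (A 0) := Set.mem_iInter.mp hxA 0
      have key := hx2 (A 0) S ⟨h0, hxdS⟩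
      have hsub : derivedSet (A 0) ∩ derivedSet S ⊆ ⋂ i, derivedSet (A i) := by
        intro y hy
        simp only [Set.mem_iInter]
        intro i
        rcases Fin.eq_zero_or_eq_succ i with rfl | ⟨j, rfl⟩
        · exact hy.1
        · have := hdSsub hy.2
          simp only [hS, Set.mem_iInter] at this
          exact this j
      exact derivedSet_mono _ _ hsub key
end

section
/- Let (X, τ) be a T_d topological space with derived-set operator d, and let τ⁺ be its derivative topology. Then a point x ∈ X is doubly d-reflexive (x ∈ d(X) and for all A, B ⊆ X, x ∈ d(A) ∩ d(B) implies x ∈ d(d(A) ∩ d(B))) if and only if x is a limit point of the space (X, τ⁺), i.e., x belongs to the τ⁺-derived set of X. -/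
/-!
The `τ⁺`-neighbourhood filter of `x` is `𝓝 x ⊓ ⨅ {𝓟 (d A) | x ∈ d A}`, so `x` is a
`τ⁺`-limit point iff `𝓝[≠] x ⊓ 𝓟 (d A₁) ⊓ ⋯ ⊓ 𝓟 (d Aₙ)` is never trivial. In a `T_d`-space
double reflexivity makes the derived sets containing `x` a directed family: `d (d A ∩ d B)`
contains `x` and lies in `d A ∩ d B` because the latter is closed. So it suffices that each
`𝓝[≠] x ⊓ 𝓟 (d A)` is nontrivial, i.e. that `x ∈ d (d A)`, which is double reflexivity with
`A = B`.
-/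

open Set Filter Topology TopologicalSpace

section

variable {X : Type*} [t : TopologicalSpace X]

def IsDoublyReflexive (x : X) : Prop :=
  x ∈ derivedSet (univ : Set X) ∧
    ∀ A B : Set X, x ∈ derivedSet A ∩ derivedSet B →
      x ∈ derivedSet (derivedSet A ∩ derivedSet B)

def derivedSetFilter (x : X) : Filter X :=
  ⨅ (A : Set X) (_ : x ∈ derivedSet A), 𝓟 (derivedSet A)

theorem derivTopology_eq_inf : derivTopology t = t ⊓ generateFrom (range derivedSet) := by
  rw [derivTopology, generateFrom_union, generateFrom_setOfPred_isOpen]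
  congr 2
  ext S
  simp [eq_comm]

theorem nhds_derivTopology (x : X) :
    @nhds X (derivTopology t) x = 𝓝 x ⊓ derivedSetFilter x := by
  rw [derivTopology_eq_inf, nhds_inf, nhds_generateFrom, derivedSetFilter]
  simp only [mem_ofPred_eq, and_comm (a := x ∈ _), iInf_and]
  rw [iInf_range (g := fun s => ⨅ _ : x ∈ s, 𝓟 s)]

theorem mem_derivedSet_univ_derivTopology_iff (x : X) :
    x ∈ @derivedSet X (derivTopology t) univ ↔ (𝓝[≠] x ⊓ derivedSetFilter x).NeBot := by
  change (@nhds X (derivTopology t) x ⊓ 𝓟 {x}ᶜ ⊓ 𝓟 univ).NeBot ↔ _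
  rw [principal_univ, inf_top_eq, nhds_derivTopology, nhdsWithin, inf_right_comm]

theorem IsDoublyReflexive.neBot_nhdsNE_inf_derivedSetFilter
    (hTd : ∀ A : Set X, IsClosed (derivedSet A)) {x : X} (hx : IsDoublyReflexive x) :
    (𝓝[≠] x ⊓ derivedSetFilter x).NeBot := by
  obtain ⟨hX, hdbl⟩ := hx
  have : Nonempty {A : Set X // x ∈ derivedSet A} := ⟨⟨univ, hX⟩⟩
  rw [derivedSetFilter, iInf_subtype', inf_iInf]
  refine iInf_neBot_of_directed' ?_ fun ⟨A, hA⟩ => ?_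
  · rintro ⟨A, hA⟩ ⟨B, hB⟩
    have hsub : derivedSet (derivedSet A ∩ derivedSet B) ⊆ derivedSet A ∩ derivedSet B :=
      (isClosed_iff_derivedSet_subset _).1 ((hTd A).inter (hTd B))
    refine ⟨⟨_, hdbl A B ⟨hA, hB⟩⟩, ?_, ?_⟩ <;>
      refine inf_le_inf_left _ (principal_mono.2 ?_)
    exacts [hsub.trans inter_subset_left, hsub.trans inter_subset_right]
  · have hAA : x ∈ derivedSet (derivedSet A) := by
      simpa only [inter_self] using hdbl A A ⟨hA, hA⟩
    exact hAA

theorem IsDoublyReflexive.of_neBot_nhdsNE_inf_derivedSetFilter {x : X}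
    (h : (𝓝[≠] x ⊓ derivedSetFilter x).NeBot) : IsDoublyReflexive x := by
  refine ⟨h.mono ?_, fun A B hAB => h.mono ?_⟩
  · simp
  · rw [← inf_principal]
    exact inf_le_inf_left _ (le_inf (iInf₂_le A hAB.1) (iInf₂_le B hAB.2))

end

/-- In a `T_d`-space `(X, t)`, a point `x` is doubly d-reflexive
iff `x` is a limit point of `(X, t⁺)`. -/
theorem doublyReflexive_iff_limitPoint_derivTopology {X : Type*} [t : TopologicalSpace X]
    (hTd : ∀ A : Set X, IsClosed (derivedSet A)) (x : X) :
    (x ∈ derivedSet (Set.univ : Set X) ∧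
        ∀ A B : Set X, x ∈ derivedSet A ∩ derivedSet B →
          x ∈ derivedSet (derivedSet A ∩ derivedSet B)) ↔
      x ∈ @derivedSet X (derivTopology t) Set.univ := by
  rw [mem_derivedSet_univ_derivTopology_iff]
  exact ⟨IsDoublyReflexive.neBot_nhdsNE_inf_derivedSetFilter hTd,
    IsDoublyReflexive.of_neBot_nhdsNE_inf_derivedSetFilter⟩
end

section
/- Let (X, τ) be a T_d topological space with derived-set operator d, let τ⁺ be its derivative topology, and let d⁺ be the derived-set operator of τ⁺. Then for every x ∈ X and A ⊆ X, x ∈ d⁺(A) if and only if both of the following hold: (i) x is doubly d-reflexive; (ii) for every B ⊆ X, x ∈ d(B) implies x ∈ d(A ∩ d(B)). -/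
open Topology


/-- A point `x` is doubly d-reflexive if `x ∈ d(X)` and for all `A`, `B`,
`x ∈ d(A) ∩ d(B)` implies `x ∈ d(d(A) ∩ d(B))`. -/
def DoublyDReflexive {X : Type*} [TopologicalSpace X] (x : X) : Prop :=
  x ∈ derivedSet (Set.univ : Set X) ∧
    ∀ A B : Set X, x ∈ derivedSet A ∩ derivedSet B →
      x ∈ derivedSet (derivedSet A ∩ derivedSet B)

/-- Open-set characterization of membership in the derived set. -/
lemma mem_derivedSet_iff_open {X : Type*} [t : TopologicalSpace X] (x : X) (A : Set X) :
    x ∈ derivedSet A ↔ ∀ U : Set X, IsOpen U → x ∈ U → ∃ y, y ∈ U ∧ y ∈ A ∧ y ≠ x := by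
  rw [mem_derivedSet, accPt_iff_nhds]
  constructor
  · intro h U hU hxU
    obtain ⟨y, ⟨hyU, hyA⟩, hyx⟩ := h U (hU.mem_nhds hxU)
    exact ⟨y, hyU, hyA, hyx⟩
  · intro h U hU
    obtain ⟨V, hVU, hVopen, hxV⟩ := mem_nhds_iff.mp hU
    obtain ⟨y, hyV, hyA, hyx⟩ := h V hVopen hxV
    exact ⟨y, ⟨hVU hyV, hyA⟩, hyx⟩

/-- In a `T_d`-space `(X, t)` with derivative topology `t⁺` and
`d⁺` the derived-set operator of `t⁺`: `x ∈ d⁺(A)` iff `x` is doubly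
d-reflexive and for every `B`, `x ∈ d(B)` implies `x ∈ d(A ∩ d(B))`. -/
theorem mem_derivedSet_derivTopology_iff {X : Type*} [t : TopologicalSpace X]
    (hTd : ∀ A : Set X, IsClosed (derivedSet A)) (x : X) (A : Set X) :
    x ∈ @derivedSet X (derivTopology t) A ↔
      (DoublyDReflexive x ∧
        ∀ B : Set X, x ∈ derivedSet B → x ∈ derivedSet (A ∩ derivedSet B)) := by
  set g : Set (Set X) :=
    {U : Set X | @IsOpen X t U} ∪ {S : Set X | ∃ A : Set X, S = @derivedSet X t A} with hg
  have hgen : ∀ S : Set X, S ∈ g → IsOpen[derivTopology t] S := fun S hS =>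
    TopologicalSpace.GenerateOpen.basic S hS
  rw [@mem_derivedSet_iff_open X (derivTopology t) x A]
  constructor
  · intro h
    -- auxiliary: applying h to sets open in t⁺
    have key : ∀ O : Set X, IsOpen[derivTopology t] O → x ∈ O →
        ∃ y, y ∈ O ∧ y ∈ A ∧ y ≠ x := h
    have hopen_dB : ∀ B : Set X, IsOpen[derivTopology t] (derivedSet B) := fun B =>
      hgen _ (Or.inr ⟨B, rfl⟩)
    have hopen_t : ∀ U : Set X, IsOpen U → IsOpen[derivTopology t] U := fun U hU =>
      hgen _ (Or.inl hU)
    constructor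
    · constructor
      · -- x ∈ d(univ)
        rw [mem_derivedSet_iff_open]
        intro U hU hxU
        obtain ⟨y, hyU, _, hyx⟩ := key U (hopen_t U hU) hxU
        exact ⟨y, hyU, trivial, hyx⟩
      · intro C D hx
        rw [mem_derivedSet_iff_open]
        intro U hU hxU
        obtain ⟨y, hyO, _, hyx⟩ := key (U ∩ (derivedSet C ∩ derivedSet D))
          (@IsOpen.inter X (derivTopology t) _ _ (hopen_t U hU) (@IsOpen.inter X (derivTopology t) _ _ (hopen_dB C) (hopen_dB D)))
          ⟨hxU, hx⟩
        exact ⟨y, hyO.1, hyO.2, hyx⟩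
    · intro B hxB
      rw [mem_derivedSet_iff_open]
      intro U hU hxU
      obtain ⟨y, hyO, hyA, hyx⟩ := key (U ∩ derivedSet B)
        (@IsOpen.inter X (derivTopology t) _ _ (hopen_t U hU) (hopen_dB B)) ⟨hxU, hxB⟩
      exact ⟨y, hyO.1, ⟨hyA, hyO.2⟩, hyx⟩
  · rintro ⟨⟨hx_univ, hx_refl⟩, hII⟩
    intro O hO hxO
    -- Every t⁺-open set containing x contains W ∩ d(B) with W t-open ∋ x, x ∈ d(B).
    have main : ∀ O : Set X, IsOpen[derivTopology t] O → x ∈ O →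
        ∃ W B : Set X, IsOpen W ∧ x ∈ W ∧ x ∈ derivedSet B ∧ W ∩ derivedSet B ⊆ O := by
      intro O hO
      induction hO with
      | basic S hS =>
        intro hxS
        rcases hS with hS | ⟨B, rfl⟩
        · exact ⟨S, Set.univ, hS, hxS, hx_univ, fun y hy => hy.1⟩
        · exact ⟨Set.univ, B, isOpen_univ, trivial, hxS, fun y hy => hy.2⟩
      | univ =>
        exact fun _ => ⟨Set.univ, Set.univ, isOpen_univ, trivial, hx_univ,
          fun y _ => trivial⟩
      | inter U V hU hV ihU ihV =>
        rintro ⟨hxU, hxV⟩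
        obtain ⟨W₁, B₁, hW₁, hxW₁, hxB₁, hsub₁⟩ := ihU hxU
        obtain ⟨W₂, B₂, hW₂, hxW₂, hxB₂, hsub₂⟩ := ihV hxV
        refine ⟨W₁ ∩ W₂, derivedSet B₁ ∩ derivedSet B₂, hW₁.inter hW₂, ⟨hxW₁, hxW₂⟩,
          hx_refl B₁ B₂ ⟨hxB₁, hxB₂⟩, ?_⟩
        have hclosed : IsClosed (derivedSet B₁ ∩ derivedSet B₂) := (hTd B₁).inter (hTd B₂)
        have hsub : derivedSet (derivedSet B₁ ∩ derivedSet B₂) ⊆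
            derivedSet B₁ ∩ derivedSet B₂ :=
          (isClosed_iff_derivedSet_subset _).mp hclosed
        rintro y ⟨⟨hyW₁, hyW₂⟩, hyd⟩
        have := hsub hyd
        exact ⟨hsub₁ ⟨hyW₁, this.1⟩, hsub₂ ⟨hyW₂, this.2⟩⟩
      | sUnion S hS ih =>
        rintro ⟨U, hUS, hxU⟩
        obtain ⟨W, B, hW, hxW, hxB, hsub⟩ := ih U hUS hxU
        exact ⟨W, B, hW, hxW, hxB, fun y hy => ⟨U, hUS, hsub hy⟩⟩
    obtain ⟨W, B, hW, hxW, hxB, hsub⟩ := main O hO hxO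
    obtain ⟨y, hyW, ⟨hyA, hyd⟩, hyx⟩ :=
      (mem_derivedSet_iff_open x (A ∩ derivedSet B)).mp (hII B hxB) W hW hxW
    exact ⟨y, hsub ⟨hyW, hyd⟩, hyA, hyx⟩
end

section
/- Consider the class of ordinals with its order topology and derived-set operator d. For any ordinal α, the following are equivalent: (i) α is d-reflexive: α ∈ d(Ω) and for every set A of ordinals, α ∈ d(A) implies α ∈ d(d(A)); (ii) α is doubly d-reflexive: α ∈ d(Ω) and for all sets A, B of ordinals, α ∈ d(A) ∩ d(B) implies α ∈ d(d(A) ∩ d(B)); (iii) the cofinality of α is uncountable, cf(α) > ℵ₀. -/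
/-!
A set accumulates at `α` iff it meets every interval `(p, α)` with `p < α`. If `cf α > ℵ₀`,
iterating a step `q ↦ f q` for which both `A` and `B` meet `(q, f q]` produces an `ω`-sequence
above `p` whose supremum stays below `α` and is a limit point of both sets. If `cf α = ℵ₀`,
the range of a cofinal `ω`-sequence accumulates at `α` but at no ordinal below `α`.
-/

open Set Order Cardinal

section SuccOrder

variable {X : Type*} [LinearOrder X] [TopologicalSpace X] [OrderTopology X] [SuccOrder X]
  [NoMaxOrder X]

theorem mem_derivedSet_univ_iff {x : X} :
    x ∈ derivedSet (Set.univ : Set X) ↔ IsSuccLimit x := by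
  refine ⟨AccPt.isSuccLimit, fun hx => ?_⟩
  rw [mem_derivedSet, SuccOrder.accPt_principal]
  exact ⟨hx.not_isMin, fun p hp => ⟨succ p, mem_univ _, lt_succ p, hx.succ_lt hp⟩⟩

theorem Monotone.lt_of_mem_derivedSet_range {g : ℕ → X} (hg : Monotone g) {x : X}
    (hx : x ∈ derivedSet (range g)) (n : ℕ) : g n < x := by
  rw [mem_derivedSet, SuccOrder.accPt_principal] at hx
  induction n with
  | zero =>
    obtain ⟨p, hp⟩ := not_isMin_iff.1 hx.1
    obtain ⟨-, ⟨m, rfl⟩, -, hm⟩ := hx.2 p hp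
    exact (hg (Nat.zero_le m)).trans_lt hm
  | succ n ih =>
    obtain ⟨-, ⟨m, rfl⟩, hnm, hm⟩ := hx.2 (g n) ih
    exact (hg (hg.reflect_lt hnm)).trans_lt hm

end SuccOrder

namespace Ordinal

theorem mem_derivedSet_univ_iff_aleph0_le_cof {α : Ordinal} :
    α ∈ derivedSet (Set.univ : Set Ordinal) ↔ ℵ₀ ≤ α.cof :=
  mem_derivedSet_univ_iff.trans (aleph0_le_cof_iff.trans one_lt_cof_iff).symm

theorem nfp_mem_derivedSet {f : Ordinal → Ordinal} {a : Ordinal} {A : Set Ordinal}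
    (h : ∀ n, (A ∩ Ioc (f^[n] a) (f^[n + 1] a)).Nonempty) : nfp f a ∈ derivedSet A := by
  have hlt : ∀ n, f^[n] a < nfp f a := fun n => by
    obtain ⟨x, -, hx, hx'⟩ := h n
    exact hx.trans_le (hx'.trans (iterate_le_nfp f a _))
  rw [mem_derivedSet, SuccOrder.accPt_principal]
  refine ⟨not_isMin_iff.2 ⟨a, hlt 0⟩, fun q hq => ?_⟩
  obtain ⟨n, hn⟩ := lt_nfp_iff.1 hq
  obtain ⟨x, hxA, hnx, hxn⟩ := h n
  exact ⟨x, hxA, hn.trans hnx, hxn.trans_lt (hlt (n + 1))⟩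

theorem mem_derivedSet_derivedSet_inter {α : Ordinal} (hα : ℵ₀ < α.cof) {A B : Set Ordinal}
    (hA : α ∈ derivedSet A) (hB : α ∈ derivedSet B) :
    α ∈ derivedSet (derivedSet A ∩ derivedSet B) := by
  rw [mem_derivedSet, SuccOrder.accPt_principal] at hA hB ⊢
  have step : ∀ q, ∃ r, q < α →
      r < α ∧ (A ∩ Ioc q r).Nonempty ∧ (B ∩ Ioc q r).Nonempty := by
    intro q
    by_cases hq : q < α
    · obtain ⟨a, haA, hqa, haα⟩ := hA.2 q hq
      obtain ⟨b, hbB, hqb, hbα⟩ := hB.2 q hq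
      exact ⟨max a b, fun _ => ⟨max_lt haα hbα, ⟨a, haA, hqa, le_max_left a b⟩,
        ⟨b, hbB, hqb, le_max_right a b⟩⟩⟩
    · exact ⟨q, fun h => absurd h hq⟩
  choose f hf using step
  have hmaps : MapsTo f (Iio α) (Iio α) := fun q hq => (hf q hq).1
  refine ⟨hA.1, fun p hp =>
    ⟨nfp f p, ⟨?_, ?_⟩, ?_, nfp_lt_ord hα (fun q hq => hmaps hq) hp⟩⟩
  · exact nfp_mem_derivedSet fun n => by
      rw [Function.iterate_succ_apply']; exact (hf _ (hmaps.iterate n hp)).2.1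
  · exact nfp_mem_derivedSet fun n => by
      rw [Function.iterate_succ_apply']; exact (hf _ (hmaps.iterate n hp)).2.2
  · obtain ⟨x, -, hpx, hx⟩ := (hf p hp).2.1
    exact hpx.trans_le (hx.trans (iterate_le_nfp f p 1))

theorem exists_strictMono_nat_of_cof_eq_aleph0 {α : Ordinal} (h : α.cof = ℵ₀) :
    ∃ g : ℕ → Ordinal, StrictMono g ∧ (∀ n, g n < α) ∧ ∀ q < α, ∃ n, q < g n := by
  obtain ⟨f, hf⟩ := exists_isFundamentalSeq (by rw [h, ord_aleph0] : α.cof.ord = ω)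
  let g : ℕ → Ordinal := fun n => f ⟨n, natCast_lt_omega0 n⟩
  have hg : StrictMono g := fun m n hmn => hf.strictMono (Subtype.mk_lt_mk.2 (Nat.cast_lt.2 hmn))
  refine ⟨g, hg, fun n => (f _).2, fun q hq => ?_⟩
  obtain ⟨-, ⟨⟨i, hi⟩, rfl⟩, hqi⟩ := hf.isCofinal_range ⟨q, hq⟩
  obtain ⟨n, rfl⟩ := lt_omega0.1 hi
  exact ⟨n + 1, hqi.trans_lt (hg n.lt_succ_self)⟩

theorem exists_mem_derivedSet_notMem_derivedSet_derivedSet {α : Ordinal} (h : α.cof = ℵ₀) :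
    ∃ A : Set Ordinal, α ∈ derivedSet A ∧ α ∉ derivedSet (derivedSet A) := by
  obtain ⟨g, hg, hgα, hcof⟩ := exists_strictMono_nat_of_cof_eq_aleph0 h
  refine ⟨range g, ?_, fun hd => ?_⟩
  · rw [mem_derivedSet, SuccOrder.accPt_principal]
    refine ⟨not_isMin_iff.2 ⟨g 0, hgα 0⟩, fun p hp => ?_⟩
    obtain ⟨n, hn⟩ := hcof p hp
    exact ⟨g n, mem_range_self n, hn, hgα n⟩
  · rw [mem_derivedSet, SuccOrder.accPt_principal] at hd
    obtain ⟨β, hβ, -, hβα⟩ := hd.2 (g 0) (hgα 0)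
    obtain ⟨n, hn⟩ := hcof β hβα
    exact (hg.monotone.lt_of_mem_derivedSet_range hβ n).not_gt hn

end Ordinal

/-- For the ordinals with the order topology and derived-set
operator `d`, the following are equivalent for an ordinal `α`:
(i) `α` is d-reflexive; (ii) `α` is doubly d-reflexive;
(iii) `α` has uncountable cofinality. -/
theorem ordinal_dReflexive_tfae (α : Ordinal) :
    List.TFAE
      [α ∈ derivedSet (Set.univ : Set Ordinal) ∧
          ∀ A : Set Ordinal, α ∈ derivedSet A → α ∈ derivedSet (derivedSet A),
        α ∈ derivedSet (Set.univ : Set Ordinal) ∧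
          ∀ A B : Set Ordinal, α ∈ derivedSet A ∩ derivedSet B →
            α ∈ derivedSet (derivedSet A ∩ derivedSet B),
        Cardinal.aleph0 < α.cof] := by
  tfae_have 2 → 1 := fun ⟨hα, h⟩ =>
    ⟨hα, fun A hA => by simpa only [inter_self] using h A A ⟨hA, hA⟩⟩
  tfae_have 1 → 3 := fun ⟨hα, h⟩ => by
    refine (Ordinal.mem_derivedSet_univ_iff_aleph0_le_cof.1 hα).lt_of_ne fun hcof => ?_
    obtain ⟨A, hA, hA'⟩ := Ordinal.exists_mem_derivedSet_notMem_derivedSet_derivedSet hcof.symm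
    exact hA' (h A hA)
  tfae_have 3 → 2 := fun h => ⟨Ordinal.mem_derivedSet_univ_iff_aleph0_le_cof.2 h.le,
    fun A B hAB => Ordinal.mem_derivedSet_derivedSet_inter h hAB.1 hAB.2⟩
  tfae_finish
end
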